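/- arXiv:1906.05208 — 2 statements merged into one kernel-verified Lean document; each statement's English description precedes it below -/
import Mathlib

section
/- For all real numbers p, q with 0 ≤ p ≤ 1 and 0 ≤ q ≤ 1 (and with both p,q strictly between 0 and 1 so the divergence is finite), the Kullback-Leibler divergence satisfies D(p‖q) ≥ (p−q)²/(2·max(p,q)) + (p−q)²/(2·max(1−p,1−q)). -/
/-!
With `klFun x = x log x + 1 - x`, each summand of the divergence satisfies
`a log (a / b) = b · klFun (a / b) + a - b`, and the linear terms cancel in the sum over
`(a, b) = (p, q), (1 - p, 1 - q)`. So it suffices that `klFun x ≥ (x - 1)² / (2 max x 1)` for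
`x > 0`. Below `1` this is `sinh (log x) ≤ log x`; above `1` it is the second-order truncation
of `-log (1 - y) = ∑ yⁿ / n` at `y = 1 - x⁻¹`.
-/

open Real InformationTheory

lemma add_sq_div_two_le_neg_log_one_sub {y : ℝ} (hy0 : 0 ≤ y) (hy1 : y < 1) :
    y + y ^ 2 / 2 ≤ -log (1 - y) := by
  have hsum := hasSum_pow_div_log_of_abs_lt_one (abs_lt.2 ⟨by linarith, hy1⟩)
  have htrunc := sum_le_hasSum (Finset.range 2) (fun n _ => by positivity) hsum
  norm_num [Finset.sum_range_succ] at htrunc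
  linarith

lemma one_sub_sq_div_two_le_klFun {x : ℝ} (hx0 : 0 < x) (hx1 : x ≤ 1) :
    (1 - x) ^ 2 / 2 ≤ klFun x := by
  have hlog : (x - x⁻¹) / 2 ≤ log x :=
    sinh_log hx0 ▸ sinh_le_self_iff.2 (log_nonpos hx0.le hx1)
  have hmul : (x ^ 2 - 1) / 2 ≤ x * log x := by
    calc (x ^ 2 - 1) / 2 = x * ((x - x⁻¹) / 2) := by field_simp
      _ ≤ x * log x := mul_le_mul_of_nonneg_left hlog hx0.le
  rw [klFun_apply]
  linarith

lemma sub_one_sq_div_le_klFun {x : ℝ} (hx : 1 ≤ x) :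
    (x - 1) ^ 2 / (2 * x) ≤ klFun x := by
  have hx0 : 0 < x := by linarith
  set y := 1 - x⁻¹ with hy
  have hlog : y + y ^ 2 / 2 ≤ log x := by
    have hy0 : 0 ≤ y := sub_nonneg.2 (inv_le_one_of_one_le₀ hx)
    have hy1 : y < 1 := sub_lt_self 1 (inv_pos.2 hx0)
    simpa [hy, log_inv] using add_sq_div_two_le_neg_log_one_sub hy0 hy1
  have hmul : x * (y + y ^ 2 / 2) ≤ x * log x := mul_le_mul_of_nonneg_left hlog hx0.le
  have hexpand : x * (y + y ^ 2 / 2) = x - 1 + (x - 1) ^ 2 / (2 * x) := by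
    rw [hy]; field_simp
  rw [klFun_apply]
  linarith

lemma sub_one_sq_div_max_le_klFun {x : ℝ} (hx : 0 < x) :
    (x - 1) ^ 2 / (2 * max x 1) ≤ klFun x := by
  rcases le_total x 1 with hx1 | hx1
  · rw [max_eq_right hx1, mul_one, ← neg_sub, neg_sq]
    exact one_sub_sq_div_two_le_klFun hx hx1
  · rw [max_eq_left hx1]
    exact sub_one_sq_div_le_klFun hx1

lemma mul_log_div_sub_add_eq_mul_klFun {a b : ℝ} (hb : 0 < b) :
    a * log (a / b) - a + b = b * klFun (a / b) := by
  rw [klFun_apply]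
  field_simp
  ring

lemma sq_sub_div_max_le_mul_log_div_sub_add {a b : ℝ} (ha : 0 < a) (hb : 0 < b) :
    (a - b) ^ 2 / (2 * max a b) ≤ a * log (a / b) - a + b := by
  have hscale : (a - b) ^ 2 / (2 * max a b) = b * ((a / b - 1) ^ 2 / (2 * max (a / b) 1)) := by
    have hmax : max (a / b) 1 = max a b / b := by
      rw [← max_div_div_right hb.le, div_self hb.ne']
    rw [hmax]
    field_simp
  rw [hscale, mul_log_div_sub_add_eq_mul_klFun hb]
  exact mul_le_mul_of_nonneg_left (sub_one_sq_div_max_le_klFun (div_pos ha hb)) hb.le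

/-- Fact: lower bound on the Bernoulli Kullback-Leibler divergence
`D(p‖q) = p·ln(p/q) + (1−p)·ln((1−p)/(1−q))`. -/
theorem kl_div_lower_bound (p q : ℝ) (hp0 : 0 < p) (hp1 : p < 1) (hq0 : 0 < q) (hq1 : q < 1) :
    (p - q) ^ 2 / (2 * max p q) + (p - q) ^ 2 / (2 * max (1 - p) (1 - q))
      ≤ p * Real.log (p / q) + (1 - p) * Real.log ((1 - p) / (1 - q)) := by
  have hsuccess := sq_sub_div_max_le_mul_log_div_sub_add hp0 hq0
  have hfailure := sq_sub_div_max_le_mul_log_div_sub_add (sub_pos.2 hp1) (sub_pos.2 hq1)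
  rw [show (1 - p - (1 - q)) ^ 2 = (p - q) ^ 2 by ring] at hfailure
  linarith
end

section
/- Let A be any event in a probability space, and let Π be uniform over a finite set of permutations. Suppose there is a map assigning to each (π, h) with h ∈ A a set P(π,h) of at least M 'swap partners' π' (each with Pr[Π = π'] = Pr[Π = π]) such that swapping takes correct outputs to incorrect outputs and Pr[H = h | Π = π] ≤ R · Pr[H = h | Π = π'] for each partner, where each π' arises from at most M' pairs. If M/(R·M') > 1 then Pr[W ∩ {output correct}] < (R·M'/M)·Pr[W ∩ {output incorrect}] for the event W that such partners exist, and hence if Pr[W] ≥ 2/3 and R·M'/M ≤ 1 then Pr[output incorrect] > 1/3. -/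
/-!
Count the swap edges `(π, h) → (π', h)` from correct to incorrect outcomes inside `W`, each
weighted by `R · Pr[π', h]`. Every correct outcome has at least `M` outgoing edges, each of weight
at least its own probability, so the total is at least `M · Pr[W ∩ correct]`; every incorrect
outcome receives at most `M'` edges, so the total is at most `R · M' · Pr[W ∩ incorrect]`.
If `R · M' < M`, the incorrect part therefore carries more than half of `Pr[W] ≥ 2/3`.
-/

open Finset

namespace Finset

variable {R α β : Type*} [Semiring R] [PartialOrder R] [IsOrderedRing R]
  {r : α → β → Prop} [∀ a b, Decidable (r a b)] {s : Finset α} {t : Finset β}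
  {f : α → R} {g : β → R} {m n : R}

theorem mul_sum_le_mul_sum_of_bipartite (hf : ∀ a ∈ s, 0 ≤ f a) (hg : ∀ b ∈ t, 0 ≤ g b)
    (hfg : ∀ a ∈ s, ∀ b ∈ t, r a b → f a ≤ g b)
    (hm : ∀ a ∈ s, m ≤ #(t.bipartiteAbove r a))
    (hn : ∀ b ∈ t, #(s.bipartiteBelow r b) ≤ n) :
    m * ∑ a ∈ s, f a ≤ n * ∑ b ∈ t, g b := by
  calc m * ∑ a ∈ s, f a
      ≤ ∑ a ∈ s, ∑ _b ∈ t.bipartiteAbove r a, f a := by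
        rw [mul_sum]
        refine sum_le_sum fun a ha => ?_
        rw [sum_const, nsmul_eq_mul]
        exact mul_le_mul_of_nonneg_right (hm a ha) (hf a ha)
    _ ≤ ∑ a ∈ s, ∑ b ∈ t.bipartiteAbove r a, g b := by
        refine sum_le_sum fun a ha => sum_le_sum fun b hb => ?_
        rw [mem_bipartiteAbove] at hb
        exact hfg a ha b hb.1 hb.2
    _ = ∑ b ∈ t, ∑ _a ∈ s.bipartiteBelow r b, g b :=
        sum_sum_bipartiteAbove_eq_sum_sum_bipartiteBelow r fun _ b => g b
    _ ≤ n * ∑ b ∈ t, g b := by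
        rw [mul_sum]
        refine sum_le_sum fun b hb => ?_
        rw [sum_const, nsmul_eq_mul]
        exact mul_le_mul_of_nonneg_right (hn b hb) (hg b hb)

end Finset

section EventMass

variable {P H : Type*} [Fintype P] [Fintype H] (p : P → H → ℝ)

def eventMass (E : P → H → Prop) [∀ π h, Decidable (E π h)] : ℝ :=
  ∑ π, ∑ h, if E π h then p π h else 0

variable {p}

theorem eventMass_eq_sum_sum_filter (E : P → H → Prop) [∀ π h, Decidable (E π h)] :
    eventMass p E = ∑ h, ∑ π with E π h, p π h := by
  rw [eventMass, sum_comm]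
  simp_rw [sum_filter]

theorem eventMass_nonneg (hp : ∀ π h, 0 ≤ p π h) (E : P → H → Prop)
    [∀ π h, Decidable (E π h)] : 0 ≤ eventMass p E :=
  sum_nonneg fun π _ => sum_nonneg fun h _ => by split_ifs <;> simp [hp]

theorem eventMass_mono (hp : ∀ π h, 0 ≤ p π h) {E F : P → H → Prop}
    [∀ π h, Decidable (E π h)] [∀ π h, Decidable (F π h)] (hEF : ∀ π h, E π h → F π h) :
    eventMass p E ≤ eventMass p F := by
  refine sum_le_sum fun π _ => sum_le_sum fun h _ => ?_
  split_ifs with hE hF hF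
  exacts [le_rfl, absurd (hEF π h hE) hF, hp π h, le_rfl]

theorem eventMass_and_add_and_not (W E : P → H → Prop) [∀ π h, Decidable (W π h)]
    [∀ π h, Decidable (E π h)] :
    eventMass p (fun π h => W π h ∧ E π h) + eventMass p (fun π h => W π h ∧ ¬ E π h)
      = eventMass p W := by
  simp only [eventMass, ← sum_add_distrib]
  refine sum_congr rfl fun π _ => sum_congr rfl fun h _ => ?_
  by_cases hW : W π h <;> by_cases hE : E π h <;> simp [hW, hE]

/-- Swap partners share the transcript `h`, so this is double counting for each fixed `h`. -/
theorem mul_eventMass_le_mul_eventMass_of_swap (hp : ∀ π h, 0 ≤ p π h)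
    (correct W : P → H → Prop) [∀ π h, Decidable (correct π h)] [∀ π h, Decidable (W π h)]
    (Rel : P → H → P → Prop) [∀ π h π', Decidable (Rel π h π')] {M M' R : ℝ} (hR : 0 < R)
    (hpartners : ∀ π h, W π h → correct π h → M ≤ #{π' | Rel π h π'})
    (hswap : ∀ π h π', Rel π h π' → p π h ≤ R * p π' h ∧ ¬ correct π' h ∧ W π' h)
    (hmult : ∀ π' h, #{π | W π h ∧ correct π h ∧ Rel π h π'} ≤ M') :
    M * eventMass p (fun π h => W π h ∧ correct π h)
      ≤ M' * R * eventMass p (fun π h => W π h ∧ ¬ correct π h) := by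
  have hfiber : ∀ h, M * ∑ π with W π h ∧ correct π h, p π h
      ≤ M' * ∑ π with W π h ∧ ¬ correct π h, R * p π h := by
    intro h
    refine mul_sum_le_mul_sum_of_bipartite (r := fun π π' => Rel π h π')
      (fun π _ => hp π h) (fun π' _ => mul_nonneg hR.le (hp π' h))
      (fun π _ π' _ hrel => (hswap π h π' hrel).1) (fun π hπ => ?_) (fun π' _ => ?_)
    · obtain ⟨hW, hc⟩ := (mem_filter.mp hπ).2
      refine (hpartners π h hW hc).trans (Nat.cast_le.mpr (card_le_card fun π' hπ' => ?_))
      obtain ⟨-, hnc, hW'⟩ := hswap π h π' (mem_filter.mp hπ').2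
      simpa [mem_bipartiteAbove, hW', hnc] using (mem_filter.mp hπ').2
    · refine le_trans (Nat.cast_le.mpr (card_le_card fun π hπ => ?_)) (hmult π' h)
      simp only [mem_bipartiteBelow, mem_filter] at hπ ⊢
      exact ⟨mem_univ π, hπ.1.2.1, hπ.1.2.2, hπ.2⟩
  calc M * eventMass p (fun π h => W π h ∧ correct π h)
      = ∑ h, M * ∑ π with W π h ∧ correct π h, p π h := by
        rw [eventMass_eq_sum_sum_filter, mul_sum]
    _ ≤ ∑ h, M' * ∑ π with W π h ∧ ¬ correct π h, R * p π h := sum_le_sum fun h _ => hfiber h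
    _ = M' * R * eventMass p (fun π h => W π h ∧ ¬ correct π h) := by
        simp_rw [eventMass_eq_sum_sum_filter, mul_sum, mul_assoc]

end EventMass

theorem lt_of_le_mul_of_add_ge {C I r a : ℝ} (ha : 0 < a) (hI : 0 ≤ I) (hr : r < 1)
    (hCI : C ≤ r * I) (hsum : 2 * a ≤ C + I) : a < I := by
  rcases hI.eq_or_lt with rfl | hI
  · linarith [mul_zero r]
  · linarith [mul_lt_mul_of_pos_right hr hI, one_mul I]

theorem counting_lower_bound_general {P H : Type*} [Fintype P] [Fintype H]
    (p : P → H → ℝ) (hp0 : ∀ π h, 0 ≤ p π h)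
    (correct : P → H → Prop) [∀ π h, Decidable (correct π h)]
    (W : P → H → Prop) [∀ π h, Decidable (W π h)]
    (Rel : P → H → P → Prop) [∀ π h π', Decidable (Rel π h π')]
    (M M' R : ℝ) (hM : 0 < M) (hR : 0 < R)
    (hpartners : ∀ π h, W π h → correct π h →
      M ≤ ((Finset.univ.filter (fun π' => Rel π h π')).card : ℝ))
    (hswap : ∀ π h π', Rel π h π' →
      p π h ≤ R * p π' h ∧ ¬ correct π' h ∧ W π' h)
    (hmult : ∀ π' h,
      ((Finset.univ.filter (fun π => W π h ∧ correct π h ∧ Rel π h π')).card : ℝ) ≤ M') :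
    (∑ π : P, ∑ h : H, if W π h ∧ correct π h then p π h else 0)
        ≤ (R * M' / M) * (∑ π : P, ∑ h : H, if W π h ∧ ¬ correct π h then p π h else 0) ∧
      (R * M' < M → (2 : ℝ) / 3 ≤ (∑ π : P, ∑ h : H, if W π h then p π h else 0) →
        1 / 3 < (∑ π : P, ∑ h : H, if ¬ correct π h then p π h else 0)) := by
  have hC : eventMass p (fun π h => W π h ∧ correct π h)
      ≤ R * M' / M * eventMass p (fun π h => W π h ∧ ¬ correct π h) := by
    rw [div_mul_eq_mul_div, le_div_iff₀ hM]
    linarith [mul_eventMass_le_mul_eventMass_of_swap hp0 correct W Rel hR hpartners hswap hmult]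
  refine ⟨hC, fun hlt hW => ?_⟩
  change 2 / 3 ≤ eventMass p W at hW
  rw [← eventMass_and_add_and_not W correct] at hW
  refine lt_of_lt_of_le ?_ (eventMass_mono hp0
    (E := fun π h => W π h ∧ ¬ correct π h) fun _ _ => And.right)
  exact lt_of_le_mul_of_add_ge (by norm_num) (eventMass_nonneg hp0 _) ((div_lt_one hM).mpr hlt)
    hC (by linarith)

/-- Abstract counting/likelihood-ratio lower-bound argument: if every pair
`(π, h)` in the event `W` with a correct output has at least `M` swap partners
`π'` (each incorrect, still in `W`, with likelihood ratio at most `R`), and each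
`π'` arises from at most `M'` pairs, then `Pr[W ∩ correct] ≤ (R·M'/M)·Pr[W ∩ incorrect]`;
hence if `R·M' < M` and `Pr[W] ≥ 2/3` then `Pr[incorrect] > 1/3`. -/
theorem counting_lower_bound {P H : Type*} [Fintype P] [Fintype H]
    (p : P → H → ℝ) (hp0 : ∀ π h, 0 ≤ p π h) (hp1 : ∑ π : P, ∑ h : H, p π h = 1)
    (correct : P → H → Prop) [∀ π h, Decidable (correct π h)]
    (W : P → H → Prop) [∀ π h, Decidable (W π h)]
    (Rel : P → H → P → Prop) [∀ π h π', Decidable (Rel π h π')]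
    (M M' R : ℝ) (hM : 0 < M) (hM' : 0 < M') (hR : 0 < R)
    (hpartners : ∀ π h, W π h → correct π h →
      M ≤ ((Finset.univ.filter (fun π' => Rel π h π')).card : ℝ))
    (hswap : ∀ π h π', Rel π h π' →
      p π h ≤ R * p π' h ∧ ¬ correct π' h ∧ W π' h)
    (hmult : ∀ π' h,
      ((Finset.univ.filter (fun π => W π h ∧ correct π h ∧ Rel π h π')).card : ℝ) ≤ M') :
    (∑ π : P, ∑ h : H, if W π h ∧ correct π h then p π h else 0)
        ≤ (R * M' / M) * (∑ π : P, ∑ h : H, if W π h ∧ ¬ correct π h then p π h else 0) ∧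
      (R * M' < M → (2 : ℝ) / 3 ≤ (∑ π : P, ∑ h : H, if W π h then p π h else 0) →
        1 / 3 < (∑ π : P, ∑ h : H, if ¬ correct π h then p π h else 0)) :=
  counting_lower_bound_general p hp0 correct W Rel M M' R hM hR hpartners hswap hmult
end
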